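/- arXiv:math/9304214 — 2 statements merged into one kernel-verified Lean document; each statement's English description precedes it below -/
import Mathlib

section
/- Up to the reversal (c_0,c_1,c_2,c_3) ↦ (c_3,c_2,c_1,c_0), the Daubechies coefficients ((1±√3)/4, (3±√3)/4, (3∓√3)/4, (1∓√3)/4) are the only real quadruples (c_0,c_1,c_2,c_3) satisfying Σ c_k = 2, Σ (-1)^k c_k = 0, Σ (-1)^k k c_k = 0, and c_0 c_2 + c_1 c_3 = 0. -/
/-- Up to reversal, the Daubechies coefficients are the only real quadruples
satisfying `Σ c_k = 2`, `Σ (-1)^k c_k = 0`, `Σ (-1)^k k c_k = 0`, and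
`c₀c₂ + c₁c₃ = 0`. -/
theorem daubechies_coefficients_unique
    (c₀ c₁ c₂ c₃ : ℝ)
    (hsum : c₀ + c₁ + c₂ + c₃ = 2)
    (halt : c₀ - c₁ + c₂ - c₃ = 0)
    (hmom : 0*c₀ - 1*c₁ + 2*c₂ - 3*c₃ = 0)
    (horth : c₀*c₂ + c₁*c₃ = 0) :
    (c₀ = (1 + Real.sqrt 3)/4 ∧ c₁ = (3 + Real.sqrt 3)/4 ∧
     c₂ = (3 - Real.sqrt 3)/4 ∧ c₃ = (1 - Real.sqrt 3)/4) ∨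
    (c₀ = (1 - Real.sqrt 3)/4 ∧ c₁ = (3 - Real.sqrt 3)/4 ∧
     c₂ = (3 + Real.sqrt 3)/4 ∧ c₃ = (1 + Real.sqrt 3)/4) := by
  set s := Real.sqrt 3 with hs
  have hs2 : s^2 = 3 := Real.sq_sqrt (by norm_num)
  have hc0 : c₀ = 1/2 - c₃ := by linarith
  have hc1 : c₁ = 1 - c₃ := by linarith
  have hc2 : c₂ = 1/2 + c₃ := by linarith
  subst hc0 hc1 hc2
  have key : (4*c₃ - (1 - s)) * (4*c₃ - (1 + s)) = 0 := by
    linear_combination (-8)*horth - hs2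
  rcases mul_eq_zero.mp key with h | h
  · left
    have h3 : c₃ = (1 - s)/4 := by linarith
    refine ⟨by linarith, by linarith, by linarith, h3⟩
  · right
    have h3 : c₃ = (1 + s)/4 := by linarith
    refine ⟨by linarith, by linarith, by linarith, h3⟩
end

section
/- If A and B commute, then the joint spectral radius ρ(A,B) equals max(ρ(A), ρ(B)). -/
open Filter Topology

attribute [local instance] Matrix.linftyOpNormedRing Matrix.linftyOpNormedAlgebra

/-!
Commuting factors can be collected, so every word of length `n` in `A` and `B` equals
`A ^ k * B ^ (n - k)`. Gelfand's formula gives `‖A ^ k‖ ≤ C s ^ k` for every `s > ρ(A)`, and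
likewise for `B`, so the `n`-th root of the largest word norm is at most `(C_A C_B) ^ (1/n) s → s`.
The words `A ^ n` and `B ^ n` give the matching lower bound.
-/

lemma Commute.list_prod_map_ite {M : Type*} [Monoid M] {a b : M} (h : Commute a b)
    (l : List Bool) :
    (l.map fun x => if x then a else b).prod = a ^ l.count true * b ^ l.count false := by
  induction l with
  | nil => simp
  | cons x l ih =>
    cases x
    · simp only [List.map_cons, List.prod_cons, ih, List.count_cons_self,
        List.count_cons_of_ne Bool.false_ne_true, Bool.false_eq_true, if_false]
      rw [← mul_assoc, (h.symm.pow_right _).eq, mul_assoc, pow_succ']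
    · simp only [List.map_cons, List.prod_cons, ih, List.count_cons_self,
        List.count_cons_of_ne Bool.false_ne_true.symm, if_true]
      rw [← mul_assoc, pow_succ']

section Words

variable {R : Type*} [NormedRing R]

noncomputable def maxWordNorm (a b : R) (n : ℕ) : ℝ :=
  Finset.univ.sup' Finset.univ_nonempty fun w : Fin n → Bool =>
    ‖(List.ofFn fun i => if w i then a else b).prod‖

lemma norm_pow_le_maxWordNorm_left (a b : R) (n : ℕ) : ‖a ^ n‖ ≤ maxWordNorm a b n :=
  Finset.le_sup'_of_le _ (Finset.mem_univ fun _ => true) (by simp)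

lemma norm_pow_le_maxWordNorm_right (a b : R) (n : ℕ) : ‖b ^ n‖ ≤ maxWordNorm a b n :=
  Finset.le_sup'_of_le _ (Finset.mem_univ fun _ => false) (by simp)

lemma maxWordNorm_le_of_commute {a b : R} (h : Commute a b) {C D s : ℝ}
    (ha : ∀ k, ‖a ^ k‖ ≤ C * s ^ k) (hb : ∀ k, ‖b ^ k‖ ≤ D * s ^ k) (n : ℕ) :
    maxWordNorm a b n ≤ C * D * s ^ n := by
  refine Finset.sup'_le _ _ fun w _ => ?_
  set l := List.ofFn w
  have hlen : l.count true + l.count false = n := by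
    rw [List.count_true_add_count_false, List.length_ofFn]
  calc ‖(List.ofFn fun i => if w i then a else b).prod‖
      = ‖a ^ l.count true * b ^ l.count false‖ := by
        rw [← h.list_prod_map_ite, List.map_ofFn]; rfl
    _ ≤ ‖a ^ l.count true‖ * ‖b ^ l.count false‖ := norm_mul_le _ _
    _ ≤ (C * s ^ l.count true) * (D * s ^ l.count false) :=
        mul_le_mul (ha _) (hb _) (norm_nonneg _) ((norm_nonneg _).trans (ha _))
    _ = C * D * s ^ n := by rw [← hlen, pow_add]; ring

end Words

lemma tendsto_rpow_inv_succ_nhds_one {D : ℝ} (hD : D ≠ 0) :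
    Tendsto (fun n : ℕ => D ^ ((n : ℝ) + 1)⁻¹) atTop (𝓝 1) := by
  simpa [Function.comp_def] using (Real.continuousAt_const_rpow (b := 0) hD).tendsto.comp
    (tendsto_one_div_add_atTop_nhds_zero_nat (𝕜 := ℝ))

lemma rpow_inv_succ_le_of_le_mul_pow {x D s : ℝ} {n : ℕ} (hx : 0 ≤ x) (hD : 0 ≤ D)
    (hs : 0 ≤ s) (h : x ≤ D * s ^ (n + 1)) :
    x ^ ((n : ℝ) + 1)⁻¹ ≤ D ^ ((n : ℝ) + 1)⁻¹ * s := by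
  calc x ^ ((n : ℝ) + 1)⁻¹ ≤ (D * s ^ (n + 1)) ^ ((n : ℝ) + 1)⁻¹ :=
        Real.rpow_le_rpow hx h (by positivity)
    _ = D ^ ((n : ℝ) + 1)⁻¹ * s := by
        rw [Real.mul_rpow hD (by positivity)]
        exact_mod_cast congrArg _ (Real.pow_rpow_inv_natCast hs n.succ_ne_zero)

section BanachAlgebra

variable {𝔸 : Type*} [NormedRing 𝔸] [NormedAlgebra ℂ 𝔸] [CompleteSpace 𝔸]

lemma spectralRadius_ne_top (a : 𝔸) : spectralRadius ℂ a ≠ ⊤ :=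
  ne_top_of_le_ne_top (by finiteness) (spectrum.spectralRadius_le_pow_nnnorm_pow_one_div ℂ a 0)

lemma tendsto_norm_pow_succ_rpow_inv (a : 𝔸) :
    Tendsto (fun n : ℕ => ‖a ^ (n + 1)‖ ^ ((n : ℝ) + 1)⁻¹) atTop
      (𝓝 (spectralRadius ℂ a).toReal) := by
  refine (((ENNReal.tendsto_toReal (spectralRadius_ne_top a)).comp
    (spectrum.pow_norm_pow_one_div_tendsto_nhds_spectralRadius a)).comp
      (tendsto_add_atTop_nat 1)).congr fun n => ?_
  simp [ENNReal.toReal_ofReal, Real.rpow_nonneg]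

lemma exists_norm_pow_le_mul_pow (a : 𝔸) {s : ℝ} (hs : (spectralRadius ℂ a).toReal < s) :
    ∃ C > 0, ∀ k : ℕ, ‖a ^ k‖ ≤ C * s ^ k := by
  have hs0 : 0 < s := ENNReal.toReal_nonneg.trans_lt hs
  have hbig : (fun k => a ^ k) =O[atTop] fun k => s ^ k := by
    refine Asymptotics.IsBigO.of_bound' ?_
    rw [← map_add_atTop_eq_nat 1, eventually_map]
    filter_upwards [(tendsto_norm_pow_succ_rpow_inv a).eventually_lt_const hs] with n hn
    rw [Real.rpow_inv_lt_iff_of_pos (norm_nonneg _) hs0.le (by positivity)] at hn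
    rw [Real.norm_of_nonneg (by positivity), ← Real.rpow_natCast]
    exact_mod_cast hn.le
  obtain ⟨C, hC, hbound⟩ := Asymptotics.bound_of_isBigO_nat_atTop hbig
  refine ⟨C, hC, fun k => ?_⟩
  simpa [abs_of_pos hs0] using hbound (pow_ne_zero k hs0.ne')

end BanachAlgebra

/-- If `A` and `B` commute, then the joint spectral radius `ρ(A,B)` equals
`max(ρ(A), ρ(B))`. -/
theorem joint_spectral_radius_of_commute
    (d : ℕ) (A B : Matrix (Fin d) (Fin d) ℂ) (hAB : A * B = B * A)
    (a : ℕ → ℝ)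
    (ha : ∀ n : ℕ, a n = Finset.univ.sup' Finset.univ_nonempty
      (fun w : Fin n → Bool =>
        ‖(List.ofFn fun i => if w i then A else B).prod‖)) :
    Tendsto (fun n : ℕ => a (n+1) ^ (((n:ℝ)+1)⁻¹)) atTop
      (nhds (max (spectralRadius ℂ A).toReal (spectralRadius ℂ B).toReal)) := by
  obtain rfl : a = maxWordNorm A B := funext ha
  refine tendsto_order.2 ⟨fun r hr => ?_, fun r hr => ?_⟩
  · filter_upwards [((tendsto_norm_pow_succ_rpow_inv A).max
      (tendsto_norm_pow_succ_rpow_inv B)).eventually_const_lt hr] with n hn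
    refine hn.trans_le (max_le ?_ ?_) <;> gcongr
    exacts [norm_pow_le_maxWordNorm_left A B _, norm_pow_le_maxWordNorm_right A B _]
  · obtain ⟨s, hs, hsr⟩ := exists_between hr
    obtain ⟨CA, hCA, hA⟩ := exists_norm_pow_le_mul_pow A ((le_max_left _ _).trans_lt hs)
    obtain ⟨CB, hCB, hB⟩ := exists_norm_pow_le_mul_pow B ((le_max_right _ _).trans_lt hs)
    have hs0 : 0 < s := ENNReal.toReal_nonneg.trans_lt ((le_max_left _ _).trans_lt hs)
    have hlim : Tendsto (fun n : ℕ => (CA * CB) ^ ((n : ℝ) + 1)⁻¹ * s) atTop (𝓝 s) := by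
      simpa using (tendsto_rpow_inv_succ_nhds_one (mul_pos hCA hCB).ne').mul_const s
    filter_upwards [hlim.eventually_lt_const hsr] with n hn
    refine (rpow_inv_succ_le_of_le_mul_pow ?_ (mul_pos hCA hCB).le hs0.le
      (maxWordNorm_le_of_commute hAB hA hB _)).trans_lt hn
    exact (norm_nonneg _).trans (norm_pow_le_maxWordNorm_left A B _)
end
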